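/- The BCH-recursion map χ: A_1 → A_1 (the unique map with a = C(P(χ(a)), P̃(χ(a)))) is a bijection, with inverse χ^{-1}(a) = C(P(a), P̃(a)) = a + BCH(P(a), P̃(a)). -/

import Mathlib

open scoped BigOperators

noncomputable def expS (K : Type*) {A : Type*} [Field K] [CharZero K] [Ring A] [Algebra K A]
    [UniformSpace A] (a : A) : A :=
  ∑' n : ℕ, ((n.factorial : K)⁻¹) • a ^ n

noncomputable def logS (K : Type*) {A : Type*} [Field K] [CharZero K] [Ring A] [Algebra K A]
    [UniformSpace A] (a : A) : A :=
  ∑' n : ℕ, (((-1 : K) ^ n) * ((n : K) + 1)⁻¹) • (a - 1) ^ (n + 1)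

noncomputable def BCHs (K : Type*) {A : Type*} [Field K] [CharZero K] [Ring A] [Algebra K A]
    [UniformSpace A] (x y : A) : A :=
  logS K (expS K x * expS K y) - x - y

/-- A complete decreasing multiplicative filtration defining the topology of `A`. -/
def IsCompleteFiltration (K : Type*) {A : Type*} [Field K] [CharZero K] [Ring A] [Algebra K A]
    [UniformSpace A] (F : ℕ → Submodule K A) : Prop :=
  F 0 = ⊤ ∧ (∀ n, F (n + 1) ≤ F n) ∧
    (∀ m n : ℕ, ∀ x ∈ F m, ∀ y ∈ F n, x * y ∈ F (m + n)) ∧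
    (∀ n, IsOpen ((F n : Set A))) ∧
    (∀ U ∈ nhds (0 : A), ∃ n, ((F n : Set A)) ⊆ U)

variable {K : Type*} [Field K] [CharZero K] {A : Type*} [Ring A] [Algebra K A]
  [UniformSpace A] [CompleteSpace A] [T2Space A] [IsTopologicalRing A]
  [IsUniformAddGroup A]

/-!
Put `ψ a := log (exp (P a) exp (a - P a)) = a + BCH (P a, a - P a)`. The fixed-point equation
for `χ` says exactly that `ψ ∘ χ = id` on `A₁ = F 1`. The BCH term is contracting for the
filtration: if `b ≡ c` modulo `F n`, then `BCH (P b, b - P b) ≡ BCH (P c, c - P c)` modulo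
`F (n + 1)`, since `exp` and `log` agree with their linear parts up to higher filtration degree.
Hence `ψ b = ψ c` forces `b ≡ c` modulo every `F n`, i.e. `b = c` as the topology is Hausdorff.
An injective left inverse is a two-sided inverse, so `χ` is a bijection with inverse `ψ`.
-/

variable {B : Type*} [Ring B] [Algebra K B] [UniformSpace B]

theorem expS_zero : expS K (0 : B) = 1 := by
  rw [expS, tsum_eq_single 0 fun k hk => by simp [zero_pow hk]]
  simp

theorem logS_one : logS K (1 : B) = 0 := by
  simp [logS]

theorem BCHs_zero_zero : BCHs K (0 : B) 0 = 0 := by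
  simp [BCHs, expS_zero, logS_one]

namespace IsCompleteFiltration

variable {F : ℕ → Submodule K B}

theorem antitone (hF : IsCompleteFiltration K F) : Antitone F :=
  antitone_nat_of_succ_le hF.2.1

theorem mem_zero (hF : IsCompleteFiltration K F) (x : B) : x ∈ F 0 :=
  hF.1 ▸ Submodule.mem_top

theorem mul_mem (hF : IsCompleteFiltration K F) {m n : ℕ} {x y : B} (hx : x ∈ F m)
    (hy : y ∈ F n) : x * y ∈ F (m + n) :=
  hF.2.2.1 m n x hx y hy

theorem pow_mem (hF : IsCompleteFiltration K F) {x : B} (hx : x ∈ F 1) (k : ℕ) :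
    x ^ k ∈ F k := by
  induction k with
  | zero => exact hF.mem_zero _
  | succ k ih => rw [pow_succ]; exact hF.mul_mem ih hx

theorem pow_succ_sub_pow_succ_mem (hF : IsCompleteFiltration K F) {x x' : B} (hx : x ∈ F 1)
    (hx' : x' ∈ F 1) {n : ℕ} (h : x - x' ∈ F n) (k : ℕ) :
    x ^ (k + 1) - x' ^ (k + 1) ∈ F (n + k) := by
  induction k with
  | zero => simpa using h
  | succ k ih =>
    have hsplit : x ^ (k + 2) - x' ^ (k + 2)
        = x * (x ^ (k + 1) - x' ^ (k + 1)) + (x - x') * x' ^ (k + 1) := by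
      rw [mul_sub, sub_mul, pow_succ' x (k + 1), pow_succ' x' (k + 1)]; abel
    rw [hsplit]
    refine add_mem ?_ (hF.mul_mem h (hF.pow_mem hx' (k + 1)))
    exact hF.antitone (by omega) (hF.mul_mem hx ih)

theorem isClosed [IsTopologicalAddGroup B] (hF : IsCompleteFiltration K F) (n : ℕ) :
    IsClosed (F n : Set B) :=
  AddSubgroup.isClosed_of_isOpen (F n).toAddSubgroup (hF.2.2.2.1 n)

theorem eq_zero_of_forall_mem [T1Space B] (hF : IsCompleteFiltration K F) {b : B}
    (h : ∀ n, b ∈ F n) : b = 0 := by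
  by_contra hb
  obtain ⟨n, hn⟩ := hF.2.2.2.2 {b}ᶜ (isOpen_compl_singleton.mem_nhds (Ne.symm hb))
  exact hn (h n) rfl

theorem summable_of_mem [IsUniformAddGroup B] [CompleteSpace B]
    (hF : IsCompleteFiltration K F) {f : ℕ → B} (hf : ∀ n, f n ∈ F n) : Summable f := by
  rw [summable_iff_vanishing]
  intro e he
  obtain ⟨n, hn⟩ := hF.2.2.2.2 e he
  refine ⟨Finset.range n, fun t ht => hn (sum_mem fun i hi => ?_)⟩
  have hni : n ≤ i :=
    not_lt.mp fun hin => Finset.disjoint_left.mp ht hi (Finset.mem_range.mpr hin)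
  exact hF.antitone hni (hf i)

theorem injOn_of_sub_sub_mem [T1Space B] (hF : IsCompleteFiltration K F) {f : B → B}
    {s : Set B} (hf : ∀ b ∈ s, ∀ c ∈ s, ∀ n, b - c ∈ F n → f b - f c - (b - c) ∈ F (n + 1)) :
    Set.InjOn f s := by
  intro b hb c hc hbc
  have hmem : ∀ n, b - c ∈ F n := by
    intro n
    induction n with
    | zero => exact hF.mem_zero _
    | succ n ih =>
      have := neg_mem (hf b hb c hc n ih)
      rwa [hbc, sub_self, zero_sub, neg_neg] at this
  exact sub_eq_zero.mp (hF.eq_zero_of_forall_mem hmem)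

section PowerSeries

variable [IsUniformAddGroup B] [CompleteSpace B] [T2Space B]

theorem tsum_smul_pow_succ_sub_tsum_sub_mem (hF : IsCompleteFiltration K F) (c : ℕ → K)
    {x x' : B} (hx : x ∈ F 1) (hx' : x' ∈ F 1) {n : ℕ} (h : x - x' ∈ F n) :
    ∑' k, c k • x ^ (k + 1) - ∑' k, c k • x' ^ (k + 1) - c 0 • (x - x') ∈ F (n + 1) := by
  have hsum : ∀ y ∈ F 1, Summable fun k => c k • y ^ (k + 1) := fun y hy =>
    hF.summable_of_mem fun k =>
      Submodule.smul_mem _ _ (hF.antitone k.le_succ (hF.pow_mem hy (k + 1)))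
  have htail : ∑' k, c k • x ^ (k + 1) - ∑' k, c k • x' ^ (k + 1) - c 0 • (x - x')
      = ∑' k, c (k + 1) • (x ^ (k + 2) - x' ^ (k + 2)) := by
    rw [← (hsum x hx).tsum_sub (hsum x' hx'),
      ((hsum x hx).sub (hsum x' hx')).tsum_eq_zero_add]
    simp only [smul_sub, zero_add, pow_one]
    abel
  rw [htail]
  exact tsum_mem (hF.isClosed _) fun k => Submodule.smul_mem _ _
    (hF.antitone (by omega) (hF.pow_succ_sub_pow_succ_mem hx hx' h (k + 1)))

theorem expS_sub_expS_sub_mem (hF : IsCompleteFiltration K F) {x x' : B} (hx : x ∈ F 1)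
    (hx' : x' ∈ F 1) {n : ℕ} (h : x - x' ∈ F n) :
    expS K x - expS K x' - (x - x') ∈ F (n + 1) := by
  have hsum : ∀ y ∈ F 1, Summable fun k => ((k.factorial : K)⁻¹) • y ^ k := fun y hy =>
    hF.summable_of_mem fun k => Submodule.smul_mem _ _ (hF.pow_mem hy k)
  rw [expS, expS, (hsum x hx).tsum_eq_zero_add, (hsum x' hx').tsum_eq_zero_add]
  simpa using
    hF.tsum_smul_pow_succ_sub_tsum_sub_mem (fun k => ((k + 1).factorial : K)⁻¹) hx hx' h

theorem expS_sub_expS_mem (hF : IsCompleteFiltration K F) {x x' : B} (hx : x ∈ F 1)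
    (hx' : x' ∈ F 1) {n : ℕ} (h : x - x' ∈ F n) : expS K x - expS K x' ∈ F n := by
  simpa using add_mem (hF.antitone n.le_succ (hF.expS_sub_expS_sub_mem hx hx' h)) h

theorem expS_sub_one_mem (hF : IsCompleteFiltration K F) {x : B} (hx : x ∈ F 1) :
    expS K x - 1 ∈ F 1 := by
  simpa [expS_zero] using hF.expS_sub_expS_mem hx (zero_mem _) (by simpa using hx)

theorem logS_sub_logS_sub_mem (hF : IsCompleteFiltration K F) {a b : B} (ha : a - 1 ∈ F 1)
    (hb : b - 1 ∈ F 1) {n : ℕ} (h : a - b ∈ F n) :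
    logS K a - logS K b - (a - b) ∈ F (n + 1) := by
  simpa [logS] using hF.tsum_smul_pow_succ_sub_tsum_sub_mem
    (fun m => (-1 : K) ^ m * ((m : K) + 1)⁻¹) ha hb (by simpa using h)

theorem expS_mul_expS_sub_sub_mem (hF : IsCompleteFiltration K F) {x y x' y' : B}
    (hx : x ∈ F 1) (hy : y ∈ F 1) (hx' : x' ∈ F 1) (hy' : y' ∈ F 1) {n : ℕ}
    (hxx : x - x' ∈ F n) (hyy : y - y' ∈ F n) :
    expS K x * expS K y - expS K x' * expS K y' - (x - x') - (y - y') ∈ F (n + 1) := by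
  have hsplit : expS K x * expS K y - expS K x' * expS K y' - (x - x') - (y - y')
      = (expS K x - expS K x' - (x - x')) + (expS K y - expS K y' - (y - y'))
        + (expS K x - expS K x') * (expS K y - 1)
        + (expS K x' - 1) * (expS K y - expS K y') := by
    noncomm_ring
  rw [hsplit]
  refine add_mem (add_mem (add_mem (hF.expS_sub_expS_sub_mem hx hx' hxx)
    (hF.expS_sub_expS_sub_mem hy hy' hyy)) ?_) ?_
  · exact hF.mul_mem (hF.expS_sub_expS_mem hx hx' hxx) (hF.expS_sub_one_mem hy)
  · rw [add_comm n]
    exact hF.mul_mem (hF.expS_sub_one_mem hx') (hF.expS_sub_expS_mem hy hy' hyy)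

theorem expS_mul_expS_sub_one_mem (hF : IsCompleteFiltration K F) {x y : B} (hx : x ∈ F 1)
    (hy : y ∈ F 1) : expS K x * expS K y - 1 ∈ F 1 := by
  have h := hF.expS_mul_expS_sub_sub_mem hx hy (zero_mem _) (zero_mem _)
    (by simpa using hx) (by simpa using hy)
  simpa only [expS_zero, mul_one, sub_zero, sub_add_cancel] using
    add_mem (add_mem (hF.antitone (by omega) h) hy) hx

theorem BCHs_sub_BCHs_mem (hF : IsCompleteFiltration K F) {x y x' y' : B} (hx : x ∈ F 1)
    (hy : y ∈ F 1) (hx' : x' ∈ F 1) (hy' : y' ∈ F 1) {n : ℕ}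
    (hxx : x - x' ∈ F n) (hyy : y - y' ∈ F n) :
    BCHs K x y - BCHs K x' y' ∈ F (n + 1) := by
  set E := expS K x * expS K y
  set E' := expS K x' * expS K y'
  have hprod : E - E' - (x - x') - (y - y') ∈ F (n + 1) :=
    hF.expS_mul_expS_sub_sub_mem hx hy hx' hy' hxx hyy
  have hEE : E - E' ∈ F n := by
    simpa only [sub_add_cancel] using add_mem (add_mem (hF.antitone n.le_succ hprod) hyy) hxx
  have hlog : logS K E - logS K E' - (E - E') ∈ F (n + 1) :=
    hF.logS_sub_logS_sub_mem (hF.expS_mul_expS_sub_one_mem hx hy)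
      (hF.expS_mul_expS_sub_one_mem hx' hy') hEE
  have hsplit : BCHs K x y - BCHs K x' y'
      = (logS K E - logS K E' - (E - E')) + (E - E' - (x - x') - (y - y')) := by
    simp only [BCHs, E, E']; abel
  rw [hsplit]
  exact add_mem hlog hprod

theorem BCHs_mem (hF : IsCompleteFiltration K F) {x y : B} (hx : x ∈ F 1) (hy : y ∈ F 1) :
    BCHs K x y ∈ F 2 := by
  simpa [BCHs_zero_zero] using hF.BCHs_sub_BCHs_mem hx hy (zero_mem _) (zero_mem _)
    (by simpa using hx) (by simpa using hy)

theorem mapsTo_add_BCHs (hF : IsCompleteFiltration K F) (P : B →ₗ[K] B)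
    (hP : ∀ x ∈ F 1, P x ∈ F 1) :
    Set.MapsTo (fun a => a + BCHs K (P a) (a - P a)) (F 1) (F 1) := fun a ha =>
  add_mem ha (hF.antitone (by omega) (hF.BCHs_mem (hP a ha) (sub_mem ha (hP a ha))))

theorem injOn_add_BCHs (hF : IsCompleteFiltration K F) (P : B →ₗ[K] B)
    (hP : ∀ n, ∀ x ∈ F n, P x ∈ F n) :
    Set.InjOn (fun a => a + BCHs K (P a) (a - P a)) (F 1) := by
  refine hF.injOn_of_sub_sub_mem fun b hb c hc n hbc => ?_
  have hPbc : P b - P c ∈ F n := by simpa using hP n _ hbc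
  have hPbc' : (b - P b) - (c - P c) ∈ F n := by
    simpa [sub_sub_sub_comm] using sub_mem hbc hPbc
  have hdiff : b + BCHs K (P b) (b - P b) - (c + BCHs K (P c) (c - P c)) - (b - c)
      = BCHs K (P b) (b - P b) - BCHs K (P c) (c - P c) := by
    abel
  exact hdiff ▸ hF.BCHs_sub_BCHs_mem (hP 1 b hb) (sub_mem hb (hP 1 b hb)) (hP 1 c hc)
    (sub_mem hc (hP 1 c hc)) hPbc hPbc'

end PowerSeries

end IsCompleteFiltration

theorem stmt3 (F : ℕ → Submodule K A) (hF : IsCompleteFiltration K F)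
    (P : A →ₗ[K] A) (hP : ∀ n, ∀ x ∈ F n, P x ∈ F n)
    (χ : A → A) (hχmem : ∀ a ∈ F 1, χ a ∈ F 1)
    (hχ : ∀ a ∈ F 1, χ a = a - BCHs K (P (χ a)) (χ a - P (χ a))) :
    Set.BijOn χ ((F 1 : Set A)) ((F 1 : Set A)) ∧
    (∀ a ∈ F 1, logS K (expS K (P (χ a)) * expS K (χ a - P (χ a))) = a) ∧
    (∀ a ∈ F 1, a + BCHs K (P a) (a - P a) = logS K (expS K (P a) * expS K (a - P a))) ∧
    (∀ a ∈ F 1, χ (a + BCHs K (P a) (a - P a)) = a) := by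
  set ψ : A → A := fun a => a + BCHs K (P a) (a - P a)
  have hψ_log : ∀ a, ψ a = logS K (expS K (P a) * expS K (a - P a)) := fun a => by
    simp only [ψ, BCHs]; abel
  have hψ_maps : Set.MapsTo ψ (F 1) (F 1) := hF.mapsTo_add_BCHs P (hP 1)
  have hψχ : Set.LeftInvOn ψ χ (F 1) := fun a ha => eq_sub_iff_add_eq.mp (hχ a ha)
  have hχψ : Set.RightInvOn ψ χ (F 1) :=
    (hF.injOn_add_BCHs P hP).rightInvOn_of_leftInvOn hψχ hψ_maps hχmem
  exact ⟨Set.InvOn.bijOn ⟨hψχ, hχψ⟩ hχmem hψ_maps,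
    fun a ha => (hψ_log (χ a)).symm.trans (hψχ ha), fun a _ => hψ_log a, fun a ha => hχψ ha⟩
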